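/- For a metric d on X with |X| = n ≥ 4 and any q ≥ 1, the q-average hyperbolicity is bounded by twice the q-average ultrametricity: AvgHyp_q(d)^q ≤ 2^q · AvgUM_q(d)^q, i.e., AvgHyp_q(d) ≤ 2·AvgUM_q(d). -/

import Mathlib

/-!
For a symmetric `d`, the three point condition of a triangle is `maxGap` of its side lengths, the
excess of the longest side over the second longest, and twice the four point condition of a
quadruple is `maxGap` of the three sums of opposite sides. A case analysis on which sides are
longest bounds the latter gap by the sum of the gaps of the four faces, so
`fp ≤ (sum of the four tp) / 2`, and the power mean inequality turns this into
`fp ^ q ≤ 2 ^ q / 4 * (sum of the four tp ^ q)`. Summing over ordered quadruples of distinct points,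
every ordered triple of distinct points is a face of exactly `n - 3` of them, and
`(n - 3) * C(n, 3) = 4 * C(n, 4)`.
-/

noncomputable section

variable {Xt : Type*}

/-- Gromov product of `x,y` with base `w`. -/
def gp (d : Xt → Xt → ℝ) (w x y : Xt) : ℝ := (d x w + d y w - d x y) / 2

/-- One term of the four point condition. -/
def fpt (d : Xt → Xt → ℝ) (w x y z : Xt) : ℝ :=
  min (gp d w x z) (gp d w y z) - gp d w x y

/-- Four point condition with base `w`: max over all permutations of the triple `x,y,z`. -/
def fp (d : Xt → Xt → ℝ) (w x y z : Xt) : ℝ :=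
  max (max (max (fpt d w x y z) (fpt d w x z y)) (max (fpt d w y x z) (fpt d w y z x)))
      (max (fpt d w z x y) (fpt d w z y x))

/-- One term of the three point condition. -/
def tpt (d : Xt → Xt → ℝ) (x y z : Xt) : ℝ := d x z - max (d x y) (d y z)

/-- Three point condition: max over all permutations of `x,y,z`. -/
def tp (d : Xt → Xt → ℝ) (x y z : Xt) : ℝ :=
  max (max (max (tpt d x y z) (tpt d x z y)) (max (tpt d y x z) (tpt d y z x)))
      (max (tpt d z x y) (tpt d z y x))

open Finset

def maxGap (a b c : ℝ) : ℝ := max (a - max b c) (max (b - max a c) (c - max a b))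

lemma maxGap_nonneg (a b c : ℝ) : 0 ≤ maxGap a b c := by
  unfold maxGap
  rcases le_total b a with hab | hab <;> rcases le_total c a with hac | hac <;>
    rcases le_total c b with hbc | hbc <;> simp [*]

lemma le_max_add_maxGap₁ (a b c : ℝ) : a ≤ max b c + maxGap a b c := by
  have : a - max b c ≤ maxGap a b c := le_max_left _ _
  linarith

lemma le_max_add_maxGap₂ (a b c : ℝ) : b ≤ max a c + maxGap a b c := by
  have : b - max a c ≤ maxGap a b c := (le_max_left _ _).trans (le_max_right _ _)
  linarith

lemma le_max_add_maxGap₃ (a b c : ℝ) : c ≤ max a b + maxGap a b c := by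
  have : c - max a b ≤ maxGap a b c := (le_max_right _ _).trans (le_max_right _ _)
  linarith

/- Read `{a, f}`, `{b, e}`, `{c, p}` as the pairs of opposite sides of a quadruple, so that
`{a, b, c}`, `{a, p, e}`, `{b, p, f}`, `{c, e, f}` are its faces. -/
lemma add_le_max_add_add_of_le_max_add {a b c e f p g₁ g₂ g₃ g₄ : ℝ}
    (h₁ : a ≤ max b c + g₁) (h₂ : a ≤ max p e + g₂) (h₃ : f ≤ max b p + g₃)
    (h₄ : f ≤ max c e + g₄) (hg₁ : 0 ≤ g₁) (hg₂ : 0 ≤ g₂) (hg₃ : 0 ≤ g₃) (hg₄ : 0 ≤ g₄) :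
    a + f ≤ max (b + e) (c + p) + (g₁ + g₂ + g₃ + g₄) := by
  simp only [max_def] at *
  split_ifs at * <;> linarith

lemma maxGap_add_le (a b c p e f : ℝ) :
    maxGap (a + f) (b + e) (c + p) ≤
      maxGap a b c + maxGap a p e + maxGap b p f + maxGap c e f := by
  have h₁ := maxGap_nonneg a b c
  have h₂ := maxGap_nonneg a p e
  have h₃ := maxGap_nonneg b p f
  have h₄ := maxGap_nonneg c e f
  rw [maxGap]
  refine max_le ?_ (max_le ?_ ?_) <;> rw [sub_le_iff_le_add']
  · exact add_le_max_add_add_of_le_max_add (le_max_add_maxGap₁ a b c) (le_max_add_maxGap₁ a p e)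
      (le_max_add_maxGap₃ b p f) (le_max_add_maxGap₃ c e f) h₁ h₂ h₃ h₄
  · linarith [add_le_max_add_add_of_le_max_add (le_max_add_maxGap₂ a b c)
      (le_max_add_maxGap₁ b p f) (le_max_add_maxGap₃ a p e) (le_max_add_maxGap₂ c e f) h₁ h₃ h₂ h₄]
  · linarith [add_le_max_add_add_of_le_max_add (le_max_add_maxGap₃ a b c)
      (le_max_add_maxGap₁ c e f) (le_max_add_maxGap₂ a p e) (le_max_add_maxGap₂ b p f) h₁ h₄ h₂ h₃]

lemma add_add_add_rpow_le {a b c e q : ℝ} (ha : 0 ≤ a) (hb : 0 ≤ b) (hc : 0 ≤ c) (he : 0 ≤ e)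
    (hq : 1 ≤ q) : (a + b + c + e) ^ q ≤ 4 ^ (q - 1) * (a ^ q + b ^ q + c ^ q + e ^ q) := by
  have h := Real.rpow_sum_le_const_mul_sum_rpow_of_nonneg univ (f := ![a, b, c, e]) hq
    (by simp [Fin.forall_fin_succ, *])
  simpa [Fin.sum_univ_four, add_assoc] using h

section SymmetricFunction

variable {X : Type*} (d : X → X → ℝ)

lemma tp_eq_maxGap (hd : ∀ a b, d a b = d b a) (x y z : X) :
    tp d x y z = maxGap (d x y) (d x z) (d y z) := by
  simp only [tp, tpt, maxGap, hd y x, hd z x, hd z y, max_comm (d y z) (d x z),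
    max_comm (d y z) (d x y), max_comm (d x z) (d x y)]
  apply le_antisymm <;> simp only [max_le_iff] <;>
    simp only [le_max_iff, le_refl, true_or, or_true, and_self]

lemma two_mul_fpt (w x y z : X) :
    2 * fpt d w x y z = d x y + d z w - max (d x z + d y w) (d y z + d x w) := by
  simp only [fpt, gp, min_def, max_def]
  split_ifs <;> linarith

lemma two_mul_fp_eq_maxGap (hd : ∀ a b, d a b = d b a) (w x y z : X) :
    2 * fp d w x y z = maxGap (d x y + d z w) (d x z + d y w) (d y z + d x w) := by
  simp only [fp, mul_max_of_nonneg _ _ (zero_le_two : (0 : ℝ) ≤ 2), two_mul_fpt, maxGap, hd y x,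
    hd z x, hd z y, max_comm (d y z + d x w) (d x z + d y w),
    max_comm (d y z + d x w) (d x y + d z w), max_comm (d x z + d y w) (d x y + d z w)]
  apply le_antisymm <;> simp only [max_le_iff] <;>
    simp only [le_max_iff, le_refl, true_or, or_true, and_self]

lemma tp_nonneg (hd : ∀ a b, d a b = d b a) (x y z : X) : 0 ≤ tp d x y z :=
  tp_eq_maxGap d hd x y z ▸ maxGap_nonneg _ _ _

lemma fp_nonneg (hd : ∀ a b, d a b = d b a) (w x y z : X) : 0 ≤ fp d w x y z := by
  have := two_mul_fp_eq_maxGap d hd w x y z ▸ maxGap_nonneg _ _ _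
  linarith

lemma fp_le_sum_tp_div_two (hd : ∀ a b, d a b = d b a) (w x y z : X) :
    fp d w x y z ≤ (tp d x y z + tp d x y w + tp d x z w + tp d y z w) / 2 := by
  have h := maxGap_add_le (d x y) (d x z) (d y z) (d x w) (d y w) (d z w)
  rw [← two_mul_fp_eq_maxGap d hd] at h
  simp only [tp_eq_maxGap d hd]
  linarith

lemma fp_rpow_le (hd : ∀ a b, d a b = d b a) {q : ℝ} (hq : 1 ≤ q) (w x y z : X) :
    fp d w x y z ^ q ≤
      2 ^ q / 4 * (tp d x y z ^ q + tp d x y w ^ q + tp d x z w ^ q + tp d y z w ^ q) := by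
  have htp := tp_nonneg d hd
  have h4 : (4 : ℝ) ^ (q - 1) = 2 ^ q * 2 ^ q / 4 := by
    rw [Real.rpow_sub_one (by norm_num), ← Real.mul_rpow (by norm_num) (by norm_num)]
    norm_num
  calc fp d w x y z ^ q
      ≤ ((tp d x y z + tp d x y w + tp d x z w + tp d y z w) / 2) ^ q :=
        Real.rpow_le_rpow (fp_nonneg d hd w x y z) (fp_le_sum_tp_div_two d hd w x y z)
          (by linarith)
    _ = (tp d x y z + tp d x y w + tp d x z w + tp d y z w) ^ q / 2 ^ q :=
        Real.div_rpow (by linarith [htp x y z, htp x y w, htp x z w, htp y z w]) zero_le_two _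
    _ ≤ 4 ^ (q - 1) * (tp d x y z ^ q + tp d x y w ^ q + tp d x z w ^ q + tp d y z w ^ q) /
          2 ^ q := by
        gcongr
        exact add_add_add_rpow_le (htp x y z) (htp x y w) (htp x z w) (htp y z w) hq
    _ = _ := by
        rw [h4]
        field_simp

end SymmetricFunction

section Counting

variable {X : Type*} [Fintype X] [DecidableEq X]

def sumDistinctTriples (F : X → X → X → ℝ) : ℝ :=
  ∑ x, ∑ y, ∑ z, if x ≠ y ∧ x ≠ z ∧ y ≠ z then F x y z else 0

def sumDistinctQuadruples (G : X → X → X → X → ℝ) : ℝ :=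
  ∑ w, ∑ x, ∑ y, ∑ z, if x ≠ y ∧ x ≠ z ∧ y ≠ z ∧ x ≠ w ∧ y ≠ w ∧ z ≠ w then G w x y z else 0

lemma sum_ite_ne_ne_ne {a b c : X} (hab : a ≠ b) (hac : a ≠ c) (hbc : b ≠ c) (r : ℝ) :
    ∑ v, (if a ≠ v ∧ b ≠ v ∧ c ≠ v then r else 0) = (Fintype.card X - 3 : ℕ) * r := by
  have hcompl : univ.filter (fun v => a ≠ v ∧ b ≠ v ∧ c ≠ v) = ({a, b, c} : Finset X)ᶜ := by
    ext v
    simp [eq_comm]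
  rw [← sum_filter, sum_const, hcompl, card_compl, card_eq_three.mpr ⟨a, b, c, hab, hac, hbc, rfl⟩,
    nsmul_eq_mul]

lemma sum_sum_sum_sum_ite_eq_card_sub_three_mul {C : X → X → X → X → Prop}
    [∀ a b c v, Decidable (C a b c v)]
    (hC : ∀ a b c v, C a b c v ↔ (a ≠ b ∧ a ≠ c ∧ b ≠ c) ∧ a ≠ v ∧ b ≠ v ∧ c ≠ v)
    (F : X → X → X → ℝ) :
    ∑ a, ∑ b, ∑ c, ∑ v, (if C a b c v then F a b c else 0) =
      (Fintype.card X - 3 : ℕ) * sumDistinctTriples F := by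
  simp only [sumDistinctTriples, mul_sum]
  refine sum_congr rfl fun a _ => sum_congr rfl fun b _ => sum_congr rfl fun c _ => ?_
  by_cases h : a ≠ b ∧ a ≠ c ∧ b ≠ c
  · simp only [hC, and_iff_right h, if_pos h]
    exact sum_ite_ne_ne_ne h.1 h.2.1 h.2.2 _
  · simp [hC, h]

lemma sumDistinctQuadruples_faces (F : X → X → X → ℝ) :
    sumDistinctQuadruples (fun w x y z => F x y z + F x y w + F x z w + F y z w) =
      4 * ((Fintype.card X - 3 : ℕ) * sumDistinctTriples F) := by
  -- in each face sum, reorder the sums so that the point off the face is summed innermost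
  have h₁ : ∑ w, ∑ x, ∑ y, ∑ z,
      (if x ≠ y ∧ x ≠ z ∧ y ≠ z ∧ x ≠ w ∧ y ≠ w ∧ z ≠ w then F x y z else 0) =
        (Fintype.card X - 3 : ℕ) * sumDistinctTriples F := by
    conv_lhs => rw [sum_comm]; enter [2, x]; rw [sum_comm]; enter [2, y]; rw [sum_comm]
    exact sum_sum_sum_sum_ite_eq_card_sub_three_mul (by grind) F
  have h₂ : ∑ w, ∑ x, ∑ y, ∑ z,
      (if x ≠ y ∧ x ≠ z ∧ y ≠ z ∧ x ≠ w ∧ y ≠ w ∧ z ≠ w then F x y w else 0) =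
        (Fintype.card X - 3 : ℕ) * sumDistinctTriples F := by
    conv_lhs => rw [sum_comm]; enter [2, x]; rw [sum_comm]
    exact sum_sum_sum_sum_ite_eq_card_sub_three_mul (by grind) F
  have h₃ : ∑ w, ∑ x, ∑ y, ∑ z,
      (if x ≠ y ∧ x ≠ z ∧ y ≠ z ∧ x ≠ w ∧ y ≠ w ∧ z ≠ w then F x z w else 0) =
        (Fintype.card X - 3 : ℕ) * sumDistinctTriples F := by
    conv_lhs => rw [sum_comm]; enter [2, x]; (conv => enter [2, w]; rw [sum_comm]); rw [sum_comm]
    exact sum_sum_sum_sum_ite_eq_card_sub_three_mul (by grind) F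
  have h₄ : ∑ w, ∑ x, ∑ y, ∑ z,
      (if x ≠ y ∧ x ≠ z ∧ y ≠ z ∧ x ≠ w ∧ y ≠ w ∧ z ≠ w then F y z w else 0) =
        (Fintype.card X - 3 : ℕ) * sumDistinctTriples F := by
    conv_lhs => enter [2, w]; rw [sum_comm]; enter [2, y]; rw [sum_comm]
    conv_lhs => rw [sum_comm]; enter [2, y]; rw [sum_comm]
    exact sum_sum_sum_sum_ite_eq_card_sub_three_mul (by grind) F
  simp only [sumDistinctQuadruples, ite_add_zero, sum_add_distrib, h₁, h₂, h₃, h₄]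
  ring

lemma sumDistinctQuadruples_le_of_le_faces {G : X → X → X → X → ℝ} {F : X → X → X → ℝ} {c : ℝ}
    (h : ∀ w x y z, G w x y z ≤ c * (F x y z + F x y w + F x z w + F y z w)) :
    sumDistinctQuadruples G ≤ c * (4 * ((Fintype.card X - 3 : ℕ) * sumDistinctTriples F)) := by
  rw [← sumDistinctQuadruples_faces]
  simp only [sumDistinctQuadruples, mul_sum, mul_ite, mul_zero]
  gcongr with w _ x _ y _ z _
  split_ifs
  exacts [h w x y z, le_rfl]

end Counting

/-- The `q`-average hyperbolicity is at most twice the `q`-average ultrametricity. -/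
theorem avgHyp_le_two_avgUM {X : Type*} [MetricSpace X] [Fintype X] [DecidableEq X]
    (hn : 4 ≤ Fintype.card X) (q : ℝ) (hq : 1 ≤ q) :
    let avgHypPow : ℝ :=
      ((∑ w : X, ∑ x : X, ∑ y : X, ∑ z : X,
          if x ≠ y ∧ x ≠ z ∧ y ≠ z ∧ x ≠ w ∧ y ≠ w ∧ z ≠ w
          then (fp (fun a b => dist a b) w x y z) ^ q else 0) / 24) /
        ((Fintype.card X).choose 4 : ℝ)
    let avgUMPow : ℝ :=
      ((∑ x : X, ∑ y : X, ∑ z : X,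
          if x ≠ y ∧ x ≠ z ∧ y ≠ z
          then (tp (fun a b => dist a b) x y z) ^ q else 0) / 6) /
        ((Fintype.card X).choose 3 : ℝ)
    avgHypPow ≤ 2 ^ q * avgUMPow := by
  intro avgHypPow avgUMPow
  have hsum := sumDistinctQuadruples_le_of_le_faces
    (fp_rpow_le (fun a b : X => dist a b) dist_comm hq)
  have hchoose : ((Fintype.card X - 3 : ℕ) : ℝ) * (Fintype.card X).choose 3 =
      4 * (Fintype.card X).choose 4 := by
    have h : (Fintype.card X).choose 4 * 4 = (Fintype.card X).choose 3 * (Fintype.card X - 3) :=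
      Nat.choose_succ_right_eq _ 3
    exact_mod_cast (by linarith [h] :
      (Fintype.card X - 3) * (Fintype.card X).choose 3 = 4 * (Fintype.card X).choose 4)
  have hC3 : (0 : ℝ) < (Fintype.card X).choose 3 := by exact_mod_cast Nat.choose_pos (by omega)
  have hC4 : (0 : ℝ) < (Fintype.card X).choose 4 := by exact_mod_cast Nat.choose_pos hn
  show sumDistinctQuadruples _ / 24 / _ ≤ 2 ^ q * (sumDistinctTriples _ / 6 / _)
  rw [div_div, div_le_iff₀ (by positivity)]
  refine hsum.trans_eq ?_
  rw [show (24 : ℝ) * (Fintype.card X).choose 4 = 6 * (4 * (Fintype.card X).choose 4) by ring,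
    ← hchoose]
  field_simp
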